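/- arXiv:0803.3074 — 3 statements merged into one kernel-verified Lean document; each statement's English description precedes it below -/
import Mathlib

section
/- ∂/∂b [ e^{-b} E(e^{-b} - e^{-t}, t; 0, b) ] = -(1/4) e^{t/2} e^{-b/2} for all b < t, where E is the de Sitter fundamental solution kernel. -/
/-- The Gauss hypergeometric function `F(a,b;c;z)`, defined by its power series. -/
noncomputable def hypC (a b c z : ℂ) : ℂ :=
  ∑' n : ℕ, ((ascPochhammer ℂ n).eval a * (ascPochhammer ℂ n).eval b /
    ((ascPochhammer ℂ n).eval c * (n.factorial : ℂ))) * z ^ n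

/-- The kernel `E(x,t;0,b)` of the fundamental solution of the Klein–Gordon
equation in de Sitter spacetime. -/
noncomputable def Ek (M : ℝ) (x t b : ℝ) : ℂ :=
  (4 * Real.exp (-b - t) : ℂ) ^ (Complex.I * M) *
    ((Real.exp (-t) + Real.exp (-b) : ℂ) ^ 2 - (x : ℂ) ^ 2) ^ (-(1/2 : ℂ) - Complex.I * M) *
    hypC (1/2 + Complex.I * M) (1/2 + Complex.I * M) 1
      (((Real.exp (-b) - Real.exp (-t) : ℂ) ^ 2 - (x : ℂ) ^ 2) /
        ((Real.exp (-b) + Real.exp (-t) : ℂ) ^ 2 - (x : ℂ) ^ 2))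

/-! On the characteristic `x = e^{-b} - e^{-t}` the argument of `F` vanishes, so `F = 1`, and the two
powers of `4 e^{-b-t} = (e^{-t} + e^{-b})² - x²` combine to `(4 e^{-b-t})^{-1/2}`. Hence
`e^{-b} E = ½ e^{t/2} e^{-b/2}` identically in `b`, and the derivative is that of an exponential. -/

open Complex

lemma hypC_zero (a b c : ℂ) : hypC a b c 0 = 1 := by
  unfold hypC
  rw [tsum_eq_single 0]
  · simp
  · intro n hn
    simp [zero_pow hn]

lemma cpow_mul_cpow_neg_half_sub {z : ℂ} (hz : z ≠ 0) (s : ℂ) :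
    z ^ s * z ^ (-(1/2) - s) = z ^ (-(1/2) : ℂ) := by
  rw [← cpow_add _ _ hz, add_sub_cancel]

lemma ofReal_sq_cpow_neg_half {x : ℝ} (hx : 0 < x) :
    ((x ^ 2 : ℝ) : ℂ) ^ (-(1/2) : ℂ) = ((x⁻¹ : ℝ) : ℂ) := by
  rw [show (-(1/2) : ℂ) = ((-(1/2) : ℝ) : ℂ) by push_cast; ring, ← ofReal_cpow (by positivity),
    Real.rpow_neg (by positivity), ← Real.sqrt_eq_rpow, Real.sqrt_sq hx.le]

theorem Ek_on_characteristic (M t b : ℝ) :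
    Ek M (Real.exp (-b) - Real.exp (-t)) t b = ((1/2 * Real.exp ((b + t)/2) : ℝ) : ℂ) := by
  have hx : 0 < 2 * Real.exp (-(b + t)/2) := by positivity
  have hx_sq : (4 * Real.exp (-b - t) : ℂ) = (((2 * Real.exp (-(b + t)/2)) ^ 2 : ℝ) : ℂ) := by
    rw [mul_pow, ← Real.exp_nat_mul]
    push_cast
    ring_nf
  have h_denom : ((Real.exp (-t) + Real.exp (-b) : ℂ)) ^ 2
      - ((Real.exp (-b) - Real.exp (-t) : ℝ) : ℂ) ^ 2 = (4 * Real.exp (-b - t) : ℂ) := by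
    push_cast
    rw [show (-(b:ℂ) - t) = -b + -t by ring, Complex.exp_add]
    ring
  have h_numer : ((Real.exp (-b) - Real.exp (-t) : ℂ)) ^ 2
      - ((Real.exp (-b) - Real.exp (-t) : ℝ) : ℂ) ^ 2 = 0 := by
    push_cast
    ring
  unfold Ek
  rw [h_denom, h_numer, zero_div, hypC_zero, mul_one, hx_sq,
    cpow_mul_cpow_neg_half_sub (by exact_mod_cast (pow_pos hx 2).ne'),
    ofReal_sq_cpow_neg_half hx]
  congr 1
  rw [mul_inv, ← Real.exp_neg]
  ring_nf

theorem exp_mul_Ek_on_characteristic (M t : ℝ) :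
    (fun b => ((Real.exp (-b) : ℝ) : ℂ) * Ek M (Real.exp (-b) - Real.exp (-t)) t b)
      = fun b => ((1/2 * Real.exp (t/2) * Real.exp (-b/2) : ℝ) : ℂ) := by
  funext b
  rw [Ek_on_characteristic, ← ofReal_mul]
  congr 1
  rw [mul_left_comm, ← Real.exp_add, mul_assoc, ← Real.exp_add]
  ring_nf

theorem deriv_exp_mul_E_on_characteristic_general (M : ℝ) (t b : ℝ) :
    deriv (fun b' => ((Real.exp (-b') : ℝ) : ℂ) *
        Ek M (Real.exp (-b') - Real.exp (-t)) t b') b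
      = ((-(1/4) * Real.exp (t/2) * Real.exp (-b/2) : ℝ) : ℂ) := by
  rw [exp_mul_Ek_on_characteristic]
  have h : HasDerivAt (fun b' : ℝ => 1/2 * Real.exp (t/2) * Real.exp (-b'/2))
      (-(1/4) * Real.exp (t/2) * Real.exp (-b/2)) b :=
    (((hasDerivAt_neg b).div_const 2).exp.const_mul (1/2 * Real.exp (t/2))).congr_deriv
      (by ring)
  exact h.ofReal_comp.deriv

/-- `∂/∂b [ e^{-b} E(e^{-b}-e^{-t}, t; 0, b) ] = -(1/4) e^{t/2} e^{-b/2}` for `b < t`. -/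
theorem deriv_exp_mul_E_on_characteristic (M : ℝ) (hM : 0 ≤ M) (t b : ℝ) (hbt : b < t) :
    deriv (fun b' => ((Real.exp (-b') : ℝ) : ℂ) *
        Ek M (Real.exp (-b') - Real.exp (-t)) t b') b
      = ((-(1/4) * Real.exp (t/2) * Real.exp (-b/2) : ℝ) : ℂ) :=
  deriv_exp_mul_E_on_characteristic_general M t b
end

section
/- As y → x + e^{-b} - e^{-t} (from inside the light cone), the limit of ∂/∂x E(x-y, t; 0, b) equals -(1/16)(1 + 4M²) e^{t/2} e^{b/2} (e^t - e^b), for b < t. -/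
/-!
Replace `x` by a complex variable `ζ`. Near the light cone `ζ = -(e^{-b} - e^{-t})` the argument
of `F` is close to `0`, where `F` is analytic, and the base of the power is close to
`(e^{-t} + e^{-b})² - (e^{-b} - e^{-t})² = 4e^{-b-t} > 0`; so the extension is holomorphic there,
its derivative is continuous, and the one-sided limit of `∂ₓE` is simply the derivative at the
light cone. Since `F(0) = 1` and `F'(0) = a²` with `a = 1/2 + iM`, the chain rule gives
`-2ζ (4e^{-b-t})^{iM + s - 1} (s + a²)` with `s = -1/2 - iM`, and `s + a² = -(1 + 4M²)/4`.
-/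

open Filter Set Complex Topology

section Hypergeometric

variable {𝕂 : Type*} (𝔸 : Type*) [RCLike 𝕂] [NormedDivisionRing 𝔸] [NormedAlgebra 𝕂 𝔸]
  (a b c : 𝕂)

/-- The radius is `1`, or `⊤` when a parameter is a nonpositive integer. -/
theorem ordinaryHypergeometricSeries_radius_pos :
    0 < (ordinaryHypergeometricSeries 𝔸 a b c).radius := by
  by_cases habc : ∀ k : ℕ, (k : 𝕂) ≠ -a ∧ (k : 𝕂) ≠ -b ∧ (k : 𝕂) ≠ -c
  · simp [ordinaryHypergeometricSeries_radius_eq_one 𝔸 a b c habc]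
  · obtain ⟨k, hk⟩ := not_forall.1 habc
    have hk' : a = -k ∨ b = -k ∨ c = -k := by
      by_contra! h
      exact hk ⟨fun e => h.1 (by rw [e]; ring), fun e => h.2.1 (by rw [e]; ring),
        fun e => h.2.2 (by rw [e]; ring)⟩
    rcases hk' with rfl | rfl | rfl
    · simp [ordinaryHypergeometric_radius_top_of_neg_nat₁]
    · simp [ordinaryHypergeometric_radius_top_of_neg_nat₂]
    · simp [ordinaryHypergeometric_radius_top_of_neg_nat₃]

theorem hasFPowerSeriesAt_ordinaryHypergeometric [CompleteSpace 𝔸] :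
    HasFPowerSeriesAt (₂F₁ a b c : 𝔸 → 𝔸) (ordinaryHypergeometricSeries 𝔸 a b c) 0 :=
  ((ordinaryHypergeometricSeries 𝔸 a b c).hasFPowerSeriesOnBall
    (ordinaryHypergeometricSeries_radius_pos 𝔸 a b c)).hasFPowerSeriesAt

theorem analyticAt_ordinaryHypergeometric_zero [CompleteSpace 𝔸] :
    AnalyticAt 𝕂 (₂F₁ a b c : 𝔸 → 𝔸) 0 :=
  (hasFPowerSeriesAt_ordinaryHypergeometric 𝔸 a b c).analyticAt

theorem hasDerivAt_ordinaryHypergeometric_zero :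
    HasDerivAt (₂F₁ a b c : 𝕂 → 𝕂) (a * b / c) 0 := by
  refine (hasFPowerSeriesAt_ordinaryHypergeometric 𝕂 a b c).hasDerivAt.congr_deriv ?_
  rw [ordinaryHypergeometricSeries_apply_eq]
  simp [div_eq_mul_inv]

end Hypergeometric

theorem hypC_eq_ordinaryHypergeometric (a b c : ℂ) : hypC a b c = ₂F₁ a b c := by
  funext z
  rw [hypC, ordinaryHypergeometric_eq_tsum]
  congr 1
  funext n
  rw [smul_eq_mul]
  field_simp

/-- `E(x,t;0,b)` is `(4e^{-b-t})^{iM}` times this with `g = F(a,a;1;·)`, `s = -1/2 - iM`,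
`P = (e^{-t} + e^{-b})²`, `Q = (e^{-b} - e^{-t})²`; the light cone is `ζ² = Q`. -/
noncomputable def coneKernel (g : ℂ → ℂ) (s P Q ζ : ℂ) : ℂ :=
  (P - ζ ^ 2) ^ s * g ((Q - ζ ^ 2) / (P - ζ ^ 2))

section ConeKernel

variable {g : ℂ → ℂ} {s P Q ζ₀ : ℂ}

theorem hasDerivAt_div_sub_sq (hζ₀ : ζ₀ ^ 2 = Q) (hPQ : P - Q ≠ 0) :
    HasDerivAt (fun ζ => (Q - ζ ^ 2) / (P - ζ ^ 2)) (-2 * ζ₀ / (P - Q)) ζ₀ := by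
  have hsq (R : ℂ) : HasDerivAt (fun ζ => R - ζ ^ 2) (-(2 * ζ₀)) ζ₀ := by
    simpa using (hasDerivAt_pow 2 ζ₀).const_sub R
  refine ((hsq Q).div (hsq P) (by rwa [hζ₀])).congr_deriv ?_
  rw [hζ₀]
  field_simp
  ring

theorem analyticAt_coneKernel (hg : AnalyticAt ℂ g 0) (hζ₀ : ζ₀ ^ 2 = Q)
    (hPQ : P - Q ∈ slitPlane) : AnalyticAt ℂ (coneKernel g s P Q) ζ₀ := by
  have hP : AnalyticAt ℂ (fun ζ : ℂ => P - ζ ^ 2) ζ₀ := by fun_prop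
  have hslit : P - ζ₀ ^ 2 ∈ slitPlane := by rwa [hζ₀]
  have hw : AnalyticAt ℂ (fun ζ => (Q - ζ ^ 2) / (P - ζ ^ 2)) ζ₀ :=
    (analyticAt_const.sub (analyticAt_id.pow 2)).div hP (slitPlane_ne_zero hslit)
  exact (hP.cpow analyticAt_const hslit).mul (hg.comp_of_eq hw (by simp [hζ₀]))

theorem hasDerivAt_coneKernel {g' : ℂ} (hg : HasDerivAt g g' 0) (hg₀ : g 0 = 1)
    (hζ₀ : ζ₀ ^ 2 = Q) (hPQ : P - Q ∈ slitPlane) :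
    HasDerivAt (coneKernel g s P Q) (-2 * ζ₀ * (P - Q) ^ (s - 1) * (s + g')) ζ₀ := by
  have hslit : P - ζ₀ ^ 2 ∈ slitPlane := by rwa [hζ₀]
  have hP : HasDerivAt (fun ζ => P - ζ ^ 2) (-(2 * ζ₀)) ζ₀ := by
    simpa using (hasDerivAt_pow 2 ζ₀).const_sub P
  have hw := hasDerivAt_div_sub_sq (P := P) hζ₀ (slitPlane_ne_zero hPQ)
  refine ((hP.cpow_const (c := s) hslit).mul (hg.comp_of_eq ζ₀ hw (by simp [hζ₀]))).congr_deriv ?_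
  have hne : P - Q ≠ 0 := slitPlane_ne_zero hPQ
  rw [Function.comp_apply, hζ₀, sub_self, zero_div, hg₀, cpow_sub _ _ hne, cpow_one]
  field_simp
  ring

end ConeKernel

theorem tendsto_deriv_comp_ofReal {G : ℂ → ℂ} {r : ℝ} (hG : AnalyticAt ℂ G r) :
    Tendsto (deriv fun x : ℝ => G x) (𝓝 r) (𝓝 (deriv G r)) := by
  have hofReal : Tendsto ((↑) : ℝ → ℂ) (𝓝 r) (𝓝 r) := continuous_ofReal.tendsto r
  have heq : deriv G ∘ (↑) =ᶠ[𝓝 r] deriv fun x : ℝ => G x := by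
    filter_upwards [hofReal.eventually hG.eventually_analyticAt] with x hx
    exact hx.differentiableAt.hasDerivAt.comp_ofReal.deriv.symm
  exact (hG.deriv.continuousAt.tendsto.comp hofReal).congr' heq

theorem exp_three_halves_mul_sub (b t : ℝ) :
    Real.exp (3 * (b + t) / 2) * (Real.exp (-b) - Real.exp (-t)) =
      Real.exp (t / 2) * Real.exp (b / 2) * (Real.exp t - Real.exp b) := by
  simp only [mul_sub, ← Real.exp_add]
  ring_nf

theorem four_mul_exp_rpow_neg_three_halves (b t : ℝ) :
    (4 * Real.exp (-b - t)) ^ (-(3 / 2) : ℝ) = Real.exp (3 * (b + t) / 2) / 8 := by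
  have h : 4 * Real.exp (-b - t) = (2 * Real.exp (-(b + t) / 2)) ^ (2 : ℝ) := by
    rw [Real.rpow_two, mul_pow, ← Real.exp_nat_mul]; ring_nf
  rw [h, ← Real.rpow_mul (by positivity), show (2 : ℝ) * -(3 / 2) = -(3 : ℕ) by norm_num,
    Real.rpow_neg (by positivity), Real.rpow_natCast, mul_pow, ← Real.exp_nat_mul]
  rw [show 3 * (b + t) / 2 = -((3 : ℕ) * (-(b + t) / 2)) by push_cast; ring, Real.exp_neg]
  field_simp
  norm_num

theorem four_mul_exp_cpow (M b t : ℝ) :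
    (4 * Real.exp (-b - t) : ℂ) ^ (I * M) * (4 * Real.exp (-b - t) : ℂ) ^ (-(1 / 2) - I * M - 1) =
      (Real.exp (3 * (b + t) / 2) / 8 : ℝ) := by
  have hpos : 0 < 4 * Real.exp (-b - t) := by positivity
  rw [← cpow_add _ _ (by exact_mod_cast hpos.ne'), ← four_mul_exp_rpow_neg_three_halves,
    ofReal_cpow hpos.le]
  push_cast
  ring_nf

section LightCone

variable (M t b : ℝ)

noncomputable def EkC (ζ : ℂ) : ℂ :=
  (4 * Real.exp (-b - t) : ℂ) ^ (I * M) *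
    coneKernel (₂F₁ (1 / 2 + I * M) (1 / 2 + I * M) 1) (-(1 / 2) - I * M)
      ((Real.exp (-t) + Real.exp (-b) : ℂ) ^ 2) ((Real.exp (-b) - Real.exp (-t) : ℂ) ^ 2) ζ

theorem Ek_eq_EkC (x : ℝ) : Ek M x t b = EkC M t b x := by
  rw [Ek, EkC, coneKernel, hypC_eq_ordinaryHypergeometric, add_comm (Real.exp (-b) : ℂ), mul_assoc]

theorem sq_exp_add_sub_sq_exp_sub :
    (Real.exp (-t) + Real.exp (-b) : ℂ) ^ 2 - (Real.exp (-b) - Real.exp (-t) : ℂ) ^ 2 =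
      ((4 * Real.exp (-b - t) : ℝ) : ℂ) := by
  rw [sub_eq_add_neg (-b), Real.exp_add]
  push_cast
  ring

theorem sq_exp_add_sub_sq_exp_sub_mem_slitPlane :
    (Real.exp (-t) + Real.exp (-b) : ℂ) ^ 2 - (Real.exp (-b) - Real.exp (-t) : ℂ) ^ 2 ∈
      slitPlane := by
  rw [sq_exp_add_sub_sq_exp_sub]
  exact ofReal_mem_slitPlane.2 (by positivity)

theorem analyticAt_EkC_light_cone :
    AnalyticAt ℂ (EkC M t b) (-(Real.exp (-b) - Real.exp (-t)) : ℝ) :=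
  analyticAt_const.mul (analyticAt_coneKernel (analyticAt_ordinaryHypergeometric_zero ℂ _ _ 1)
    (by push_cast; ring) (sq_exp_add_sub_sq_exp_sub_mem_slitPlane t b))

theorem deriv_EkC_light_cone :
    deriv (EkC M t b) (-(Real.exp (-b) - Real.exp (-t)) : ℝ) =
      -(1 / 16 : ℂ) * (1 + 4 * (M : ℂ) ^ 2) * ((Real.exp (t / 2) : ℝ) : ℂ) *
        ((Real.exp (b / 2) : ℝ) : ℂ) * ((Real.exp t - Real.exp b : ℝ) : ℂ) := by
  have hderiv := hasDerivAt_coneKernel (s := -(1 / 2) - I * M)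
    (ζ₀ := (-(Real.exp (-b) - Real.exp (-t)) : ℝ))
    (hasDerivAt_ordinaryHypergeometric_zero (1 / 2 + I * M) (1 / 2 + I * M) 1)
    (ordinaryHypergeometric_zero _ _ _) (by push_cast; ring)
    (sq_exp_add_sub_sq_exp_sub_mem_slitPlane t b)
  rw [HasDerivAt.deriv (f := EkC M t b) (hderiv.const_mul _), sq_exp_add_sub_sq_exp_sub]
  have hC := four_mul_exp_cpow M b t
  have hexp := congrArg ((↑) : ℝ → ℂ) (exp_three_halves_mul_sub b t)
  push_cast at hC hexp ⊢
  linear_combination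
    (2 * (cexp (-b) - cexp (-t)) * (-(1 / 2) - I * M + (1 / 2 + I * M) ^ 2)) * hC
      - (1 + 4 * (M : ℂ) ^ 2) / 16 * hexp
      + (cexp (3 * (b + t) / 2) * (cexp (-b) - cexp (-t)) / 4 * M ^ 2) * I_sq

end LightCone

theorem limit_deriv_E_at_light_cone_general (M : ℝ) (t b : ℝ) (x : ℝ) :
    Filter.Tendsto (fun y => deriv (fun x' => Ek M (x' - y) t b) x)
      (nhdsWithin (x + (Real.exp (-b) - Real.exp (-t)))
        (Set.Iio (x + (Real.exp (-b) - Real.exp (-t)))))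
      (nhds (-(1/16 : ℂ) * (1 + 4 * (M : ℂ) ^ 2) *
        ((Real.exp (t/2) : ℝ) : ℂ) * ((Real.exp (b/2) : ℝ) : ℂ) *
        ((Real.exp t - Real.exp b : ℝ) : ℂ))) := by
  set d := Real.exp (-b) - Real.exp (-t)
  have hlim : Tendsto (fun y => x - y) (𝓝[<] (x + d)) (𝓝 (-d)) :=
    ((continuous_const.sub continuous_id).tendsto' (x + d) (-d) (by simp)).mono_left
      nhdsWithin_le_nhds
  simp_rw [deriv_comp_sub_const (f := fun z : ℝ => Ek M z t b), Ek_eq_EkC,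
    ← deriv_EkC_light_cone M t b]
  exact (tendsto_deriv_comp_ofReal (analyticAt_EkC_light_cone M t b)).comp hlim

/-- As `y → x + e^{-b} - e^{-t}` from inside the light cone, the limit of
`∂/∂x E(x-y,t;0,b)` equals `-(1/16)(1+4M²) e^{t/2} e^{b/2} (e^t - e^b)`, for `b < t`. -/
theorem limit_deriv_E_at_light_cone (M : ℝ) (hM : 0 ≤ M) (t b : ℝ) (hbt : b < t) (x : ℝ) :
    Filter.Tendsto (fun y => deriv (fun x' => Ek M (x' - y) t b) x)
      (nhdsWithin (x + (Real.exp (-b) - Real.exp (-t)))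
        (Set.Iio (x + (Real.exp (-b) - Real.exp (-t)))))
      (nhds (-(1/16 : ℂ) * (1 + 4 * (M : ℂ) ^ 2) *
        ((Real.exp (t/2) : ℝ) : ℂ) * ((Real.exp (b/2) : ℝ) : ℂ) *
        ((Real.exp t - Real.exp b : ℝ) : ℂ))) :=
  limit_deriv_E_at_light_cone_general M t b x
end

section
/- Assume -1 < α ≤ 0 where α = 2s - n(1/p - 1/q). There is a constant C such that for all z > 1: ∫₀^{z-1} r^α ((z+1)² - r²)^{-1/2} F(1/2, 1/2; 1; ((z-1)²-r²)/((z+1)²-r²)) dr ≤ C z^{-1} (z-1)^{1+α} (1 + ln z). -/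
/-!
The coefficients `cₙ = ((1/2)ₙ / n!)²` of `F(1/2,1/2;1;x)` satisfy `cₙ (2n+1) ≤ 1`, so comparing
with `-log (1 - x) = ∑ xⁿ⁺¹/(n+1)` gives `F(x) ≤ 1 - log (1 - x)`; at the argument in the
integrand this is at most `1 + log z`. Since `(z+1)² - r² ≥ (z+1)(z+1-r)`, what remains is
`∫₀^{z-1} r^α (z+1-r)^{-1/2} dr`. On `[0, (z-1)/2]` the square root is at least `√z / 2`, and on
`[(z-1)/2, z-1]` the weight is at most `2 (z-1)^α` while `(z+1-r)^{-1/2}` integrates to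
`O((z-1)/√z)`; both pieces are `O((z-1)^{1+α} / √z)`.
-/

/-- The Gauss hypergeometric function `F(a,b;c;z)` over `ℝ`, by its power series. -/
noncomputable def hypR (a b c z : ℝ) : ℝ :=
  ∑' n : ℕ, ((ascPochhammer ℝ n).eval a * (ascPochhammer ℝ n).eval b /
    ((ascPochhammer ℝ n).eval c * (n.factorial : ℝ))) * z ^ n

open Real Set MeasureTheory intervalIntegral

theorem intervalIntegral_mono_on_of_nonneg {f g : ℝ → ℝ} {a b : ℝ} (hab : a ≤ b)
    (hg : IntervalIntegrable g volume a b) (hf : ∀ x ∈ Ioc a b, 0 ≤ f x)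
    (hfg : ∀ x ∈ Ioc a b, f x ≤ g x) : ∫ x in a..b, f x ≤ ∫ x in a..b, g x := by
  rw [integral_of_le hab, integral_of_le hab]
  exact integral_mono_of_nonneg (ae_restrict_of_forall_mem measurableSet_Ioc hf) hg.1
    (ae_restrict_of_forall_mem measurableSet_Ioc hfg)

theorem continuousOn_inv_sqrt_sub {a : ℝ} {s : Set ℝ} (hs : ∀ r ∈ s, r < a) :
    ContinuousOn (fun r => (√(a - r))⁻¹) s :=
  (continuous_const.sub continuous_id).sqrt.continuousOn.inv₀ fun r hr =>
    (sqrt_pos.2 (sub_pos.2 (hs r hr))).ne'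

theorem intervalIntegrable_rpow_mul_inv_sqrt {α a b : ℝ} (hα : -1 < α) (hb0 : 0 ≤ b)
    (hb : b < a) : IntervalIntegrable (fun r => r ^ α * (√(a - r))⁻¹) volume 0 b :=
  (intervalIntegrable_rpow' hα).mul_continuousOn <| continuousOn_inv_sqrt_sub fun _ hr =>
    ((uIcc_of_le hb0 ▸ hr).2).trans_lt hb

theorem integral_inv_sqrt_sub {a m b : ℝ} (hmb : m ≤ b) (hb : b < a) :
    ∫ r in m..b, (√(a - r))⁻¹ = 2 * √(a - m) - 2 * √(a - b) := by
  have hderiv : ∀ r ∈ uIcc m b, HasDerivAt (fun r => -2 * √(a - r)) (√(a - r))⁻¹ r := by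
    intro r hr
    rw [uIcc_of_le hmb] at hr
    have hpos : 0 < a - r := by linarith [hr.2]
    refine ((((hasDerivAt_id' r).const_sub a).sqrt hpos.ne').const_mul (-2)).congr_deriv ?_
    field_simp
  rw [integral_eq_sub_of_hasDerivAt hderiv]
  · ring
  exact (continuousOn_inv_sqrt_sub fun r hr => ((uIcc_of_le hmb ▸ hr).2).trans_lt hb
    ).intervalIntegrable

theorem inv_sqrt_le_two_mul_inv_sqrt {x y : ℝ} (hy : 0 < y) (h : y ≤ 4 * x) :
    (√x)⁻¹ ≤ 2 * (√y)⁻¹ := by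
  have hsqrt : √y ≤ 2 * √x :=
    calc √y ≤ √(2 ^ 2 * x) := sqrt_le_sqrt (by linarith)
      _ = 2 * √x := by rw [sqrt_mul (by norm_num), sqrt_sq (by norm_num)]
  calc (√x)⁻¹ ≤ (√y / 2)⁻¹ := inv_anti₀ (half_pos (sqrt_pos.2 hy)) (by linarith)
    _ = 2 * (√y)⁻¹ := by rw [inv_div, div_eq_mul_inv]

theorem sqrt_sub_sqrt_le {x y : ℝ} (hy : 0 ≤ y) (hyx : y ≤ x) : √x - √y ≤ (x - y) / √x := by
  rcases hyx.eq_or_lt with rfl | hlt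
  · simp
  have hx : 0 < √x := sqrt_pos.2 (hy.trans_lt hlt)
  rw [le_div_iff₀ hx]
  nlinarith [sq_sqrt hy, sq_sqrt (hy.trans hlt.le), sqrt_nonneg y, sqrt_le_sqrt hlt.le]

noncomputable def hypCoeff (a b c : ℝ) (n : ℕ) : ℝ :=
  (ascPochhammer ℝ n).eval a * (ascPochhammer ℝ n).eval b /
    ((ascPochhammer ℝ n).eval c * (n.factorial : ℝ))

theorem hypR_eq_tsum (a b c x : ℝ) : hypR a b c x = ∑' n, hypCoeff a b c n * x ^ n := rfl

theorem ascPochhammer_eval_half_sq_mul_le (n : ℕ) :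
    (ascPochhammer ℝ n).eval (1 / 2) ^ 2 * (2 * n + 1) ≤ (n.factorial : ℝ) ^ 2 := by
  induction n with
  | zero => norm_num
  | succ n ih =>
    rw [ascPochhammer_succ_eval, Nat.factorial_succ]
    push_cast
    have hstep : (2 * (n : ℝ) + 1) * (2 * n + 3) / 4 ≤ ((n : ℝ) + 1) ^ 2 := by nlinarith
    calc ((ascPochhammer ℝ n).eval (1 / 2) * (1 / 2 + n)) ^ 2 * (2 * ((n : ℝ) + 1) + 1)
        = (ascPochhammer ℝ n).eval (1 / 2) ^ 2 * (2 * n + 1) * ((2 * n + 1) * (2 * n + 3) / 4) := by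
          ring
      _ ≤ (n.factorial : ℝ) ^ 2 * ((n + 1) ^ 2) := by gcongr
      _ = ((n + 1) * (n.factorial : ℝ)) ^ 2 := by ring

theorem hypCoeff_half_nonneg (n : ℕ) : 0 ≤ hypCoeff (1 / 2) (1 / 2) 1 n := by
  have := ascPochhammer_pos n (1 / 2 : ℝ) (by norm_num)
  have := n.factorial_pos
  rw [hypCoeff, ascPochhammer_eval_one]
  positivity

theorem hypCoeff_half_mul_le (n : ℕ) : hypCoeff (1 / 2) (1 / 2) 1 n * (2 * n + 1) ≤ 1 := by
  have hfac : (0 : ℝ) < n.factorial := mod_cast n.factorial_pos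
  rw [hypCoeff, ascPochhammer_eval_one, div_mul_eq_mul_div, div_le_one (by positivity)]
  nlinarith [ascPochhammer_eval_half_sq_mul_le n]

theorem hypR_half_nonneg {x : ℝ} (hx : 0 ≤ x) : 0 ≤ hypR (1 / 2) (1 / 2) 1 x :=
  tsum_nonneg fun n => mul_nonneg (hypCoeff_half_nonneg n) (pow_nonneg hx n)

theorem hypR_half_le_one_sub_log {x : ℝ} (h0 : 0 ≤ x) (h1 : x < 1) :
    hypR (1 / 2) (1 / 2) 1 x ≤ 1 - log (1 - x) := by
  have hlog := hasSum_pow_div_log_of_abs_lt_one (abs_lt.2 ⟨by linarith, h1⟩)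
  have hle : ∀ n : ℕ,
      hypCoeff (1 / 2) (1 / 2) 1 (n + 1) * x ^ (n + 1) ≤ x ^ (n + 1) / (n + 1) := by
    intro n
    have hc := hypCoeff_half_mul_le (n + 1)
    have hc0 := hypCoeff_half_nonneg (n + 1)
    have hx := pow_nonneg h0 (n + 1)
    push_cast at hc
    rw [le_div_iff₀ (by positivity)]
    nlinarith
  have htail : Summable fun n : ℕ => hypCoeff (1 / 2) (1 / 2) 1 (n + 1) * x ^ (n + 1) :=
    Summable.of_nonneg_of_le
      (fun n => mul_nonneg (hypCoeff_half_nonneg _) (pow_nonneg h0 _)) hle hlog.summable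
  have hsum : Summable fun n : ℕ => hypCoeff (1 / 2) (1 / 2) 1 n * x ^ n :=
    (summable_nat_add_iff 1).1 htail
  have hcoeff_zero : hypCoeff (1 / 2) (1 / 2) 1 0 = 1 := by simp [hypCoeff]
  rw [hypR_eq_tsum, hsum.tsum_eq_zero_add, hcoeff_zero, pow_zero, one_mul, sub_eq_add_neg,
    ← hlog.tsum_eq]
  exact add_le_add le_rfl (htail.tsum_le_tsum hle hlog.summable)

theorem hypArg_mem_Ico {z r : ℝ} (hz : 1 < z) (hr0 : 0 ≤ r) (hr : r ≤ z - 1) :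
    ((z - 1) ^ 2 - r ^ 2) / ((z + 1) ^ 2 - r ^ 2) ∈ Ico 0 1 := by
  have hD : 0 < (z + 1) ^ 2 - r ^ 2 := by nlinarith
  exact ⟨div_nonneg (by nlinarith) hD.le, (div_lt_one hD).2 (by linarith)⟩

/-- For the argument `x` here, `1 - x = 4z / ((z+1)² - r²)` and `(z+1)² - r² ≤ (z+1)² ≤ 4z²`. -/
theorem hypR_half_le_one_add_log {z r : ℝ} (hz : 1 < z) (hr0 : 0 ≤ r) (hr : r ≤ z - 1) :
    hypR (1 / 2) (1 / 2) 1 (((z - 1) ^ 2 - r ^ 2) / ((z + 1) ^ 2 - r ^ 2)) ≤ 1 + log z := by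
  have hD : 4 * z ≤ (z + 1) ^ 2 - r ^ 2 := by nlinarith
  have hD0 : (z + 1) ^ 2 - r ^ 2 ≠ 0 := by linarith
  have hone_sub : 1 - ((z - 1) ^ 2 - r ^ 2) / ((z + 1) ^ 2 - r ^ 2)
      = (((z + 1) ^ 2 - r ^ 2) / (4 * z))⁻¹ := by
    field_simp; ring
  have hlog : log (((z + 1) ^ 2 - r ^ 2) / (4 * z)) ≤ log z := by
    apply log_le_log (div_pos (by linarith) (by linarith))
    rw [div_le_iff₀ (by positivity)]
    nlinarith
  obtain ⟨hx0, hx1⟩ := hypArg_mem_Ico hz hr0 hr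
  refine (hypR_half_le_one_sub_log hx0 hx1).trans ?_
  rw [hone_sub, log_inv]
  linarith

noncomputable def hypIntegrand (α z r : ℝ) : ℝ :=
  r ^ α * (√((z + 1) ^ 2 - r ^ 2))⁻¹ *
    hypR (1 / 2) (1 / 2) 1 (((z - 1) ^ 2 - r ^ 2) / ((z + 1) ^ 2 - r ^ 2))

theorem hypIntegrand_nonneg {α z r : ℝ} (hz : 1 < z) (hr0 : 0 ≤ r) (hr : r ≤ z - 1) :
    0 ≤ hypIntegrand α z r :=
  mul_nonneg (mul_nonneg (rpow_nonneg hr0 α) (by positivity))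
    (hypR_half_nonneg (hypArg_mem_Ico hz hr0 hr).1)

theorem hypIntegrand_le {α z r : ℝ} (hz : 1 < z) (hr0 : 0 ≤ r) (hr : r ≤ z - 1) :
    hypIntegrand α z r ≤ (1 + log z) * (√(z + 1))⁻¹ * (r ^ α * (√(z + 1 - r))⁻¹) := by
  have hsqrt : (√((z + 1) ^ 2 - r ^ 2))⁻¹ ≤ (√(z + 1))⁻¹ * (√(z + 1 - r))⁻¹ := by
    rw [← mul_inv, ← sqrt_mul (by linarith)]
    exact inv_anti₀ (sqrt_pos.2 (by nlinarith)) (sqrt_le_sqrt (by nlinarith))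
  have hα := rpow_nonneg hr0 α
  have hlog : 0 ≤ 1 + log z := by linarith [log_nonneg hz.le]
  calc hypIntegrand α z r ≤ r ^ α * (√((z + 1) ^ 2 - r ^ 2))⁻¹ * (1 + log z) := by
        unfold hypIntegrand
        gcongr
        exact hypR_half_le_one_add_log hz hr0 hr
    _ ≤ r ^ α * ((√(z + 1))⁻¹ * (√(z + 1 - r))⁻¹) * (1 + log z) := by gcongr
    _ = (1 + log z) * (√(z + 1))⁻¹ * (r ^ α * (√(z + 1 - r))⁻¹) := by ring

theorem integral_rpow_mul_inv_sqrt_le_left {α z : ℝ} (hα : -1 < α) (hz : 1 < z) :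
    ∫ r in (0 : ℝ)..(z - 1) / 2, r ^ α * (√(z + 1 - r))⁻¹
      ≤ 2 / (α + 1) * (z - 1) ^ (α + 1) * (√z)⁻¹ := by
  have hm0 : 0 ≤ (z - 1) / 2 := by linarith
  calc ∫ r in (0 : ℝ)..(z - 1) / 2, r ^ α * (√(z + 1 - r))⁻¹
      ≤ ∫ r in (0 : ℝ)..(z - 1) / 2, r ^ α * (2 * (√z)⁻¹) := by
        refine integral_mono_on hm0 (intervalIntegrable_rpow_mul_inv_sqrt hα hm0 (by linarith))
          ((intervalIntegrable_rpow' hα).mul_const _) fun r hr => ?_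
        have := rpow_nonneg hr.1 α
        gcongr
        exact inv_sqrt_le_two_mul_inv_sqrt (by linarith) (by linarith [hr.2])
    _ = ((z - 1) / 2) ^ (α + 1) / (α + 1) * (2 * (√z)⁻¹) := by
        rw [intervalIntegral.integral_mul_const, integral_rpow (Or.inl hα),
          zero_rpow (by linarith), sub_zero]
    _ ≤ (z - 1) ^ (α + 1) / (α + 1) * (2 * (√z)⁻¹) := by
        have : 0 < α + 1 := by linarith
        gcongr
        linarith
    _ = 2 / (α + 1) * (z - 1) ^ (α + 1) * (√z)⁻¹ := by ring

theorem integral_rpow_mul_inv_sqrt_le_right {α z : ℝ} (h1 : -1 ≤ α) (h2 : α ≤ 0) (hz : 1 < z) :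
    ∫ r in (z - 1) / 2..z - 1, r ^ α * (√(z + 1 - r))⁻¹ ≤ 4 * (z - 1) ^ (α + 1) * (√z)⁻¹ := by
  set b := z - 1
  have hb : 0 < b := by linarith
  have hm : 0 < b / 2 := by positivity
  have hmb : b / 2 ≤ b := by linarith
  have hcont : ContinuousOn (fun r => (√(z + 1 - r))⁻¹) (uIcc (b / 2) b) :=
    continuousOn_inv_sqrt_sub fun _ hr => ((uIcc_of_le hmb ▸ hr).2).trans_lt (by linarith)
  have hcont_rpow : ContinuousOn (fun r : ℝ => r ^ α) (uIcc (b / 2) b) :=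
    continuousOn_id.rpow_const fun r hr => Or.inl (hm.trans_le (uIcc_of_le hmb ▸ hr).1).ne'
  have hhalf_rpow : (b / 2) ^ α ≤ 2 * b ^ α := by
    have h2α : (2 : ℝ) ^ (-1 : ℝ) ≤ 2 ^ α := rpow_le_rpow_of_exponent_le (by norm_num) h1
    rw [rpow_neg_one] at h2α
    rw [div_rpow hb.le (by norm_num), div_le_iff₀ (by positivity)]
    nlinarith [rpow_pos_of_pos hb α]
  have hsqrt : 2 * √(z + 1 - b / 2) - 2 * √(z + 1 - b) ≤ 2 * b * (√z)⁻¹ := by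
    have hsub : √(z + 1 - b / 2) - √(z + 1 - b) ≤ b / 2 * (√(z + 1 - b / 2))⁻¹ :=
      (sqrt_sub_sqrt_le (by linarith) (by linarith)).trans_eq (by ring)
    have hinv := inv_sqrt_le_two_mul_inv_sqrt (x := z + 1 - b / 2) (y := z) (by linarith)
      (by linarith)
    linarith [mul_le_mul_of_nonneg_left hinv hb.le]
  calc ∫ r in b / 2..b, r ^ α * (√(z + 1 - r))⁻¹
      ≤ ∫ r in b / 2..b, (b / 2) ^ α * (√(z + 1 - r))⁻¹ := by
        refine integral_mono_on hmb (hcont_rpow.mul hcont).intervalIntegrable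
          (hcont.intervalIntegrable.const_mul _) fun r hr =>
            mul_le_mul_of_nonneg_right (rpow_le_rpow_of_nonpos hm hr.1 h2) (by positivity)
    _ = (b / 2) ^ α * (2 * √(z + 1 - b / 2) - 2 * √(z + 1 - b)) := by
        rw [intervalIntegral.integral_const_mul, integral_inv_sqrt_sub hmb (by linarith)]
    _ ≤ 2 * b ^ α * (2 * b * (√z)⁻¹) := by
        have : √(z + 1 - b) ≤ √(z + 1 - b / 2) := sqrt_le_sqrt (by linarith)
        gcongr
        linarith
    _ = 4 * b ^ (α + 1) * (√z)⁻¹ := by rw [rpow_add_one hb.ne']; ring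

theorem integral_rpow_mul_inv_sqrt_le {α z : ℝ} (h1 : -1 < α) (h2 : α ≤ 0) (hz : 1 < z) :
    ∫ r in (0 : ℝ)..z - 1, r ^ α * (√(z + 1 - r))⁻¹
      ≤ (2 / (α + 1) + 4) * (z - 1) ^ (α + 1) * (√z)⁻¹ := by
  have hint := intervalIntegrable_rpow_mul_inv_sqrt h1 (by linarith : 0 ≤ z - 1)
    (by linarith : z - 1 < z + 1)
  have hmid : (z - 1) / 2 ∈ uIcc 0 (z - 1) := mem_uIcc_of_le (by linarith) (by linarith)
  rw [← integral_add_adjacent_intervals (hint.mono_set (uIcc_subset_uIcc_left hmid))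
    (hint.mono_set (uIcc_subset_uIcc_right hmid))]
  linarith [integral_rpow_mul_inv_sqrt_le_left h1 hz,
    integral_rpow_mul_inv_sqrt_le_right h1.le h2 hz]

theorem weighted_hyp_integral_estimate_general (α : ℝ) (h1 : -1 < α) (h2 : α ≤ 0) :
    ∃ C > 0, ∀ z : ℝ, 1 < z →
      (∫ r in (0:ℝ)..(z - 1), r ^ α * (Real.sqrt ((z + 1) ^ 2 - r ^ 2))⁻¹ *
          hypR (1/2) (1/2) 1 (((z - 1) ^ 2 - r ^ 2) / ((z + 1) ^ 2 - r ^ 2)))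
        ≤ C * z⁻¹ * (z - 1) ^ (1 + α) * (1 + Real.log z) := by
  have hα : 0 < 1 + α := by linarith
  refine ⟨2 / (1 + α) + 4, by positivity, fun z hz => ?_⟩
  have hlog : 0 ≤ 1 + log z := by linarith [log_nonneg hz.le]
  have hsqrt_inv : (√(z + 1))⁻¹ * (√z)⁻¹ ≤ z⁻¹ := by
    rw [← mul_inv, ← sqrt_mul (by linarith)]
    exact inv_anti₀ (by linarith) ((le_sqrt' (by linarith)).2 (by nlinarith))
  rw [add_comm 1 α] at hα ⊢
  calc ∫ r in (0 : ℝ)..z - 1, hypIntegrand α z r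
      ≤ ∫ r in (0 : ℝ)..z - 1, (1 + log z) * (√(z + 1))⁻¹ * (r ^ α * (√(z + 1 - r))⁻¹) :=
        intervalIntegral_mono_on_of_nonneg (by linarith)
          ((intervalIntegrable_rpow_mul_inv_sqrt h1 (by linarith) (by linarith)).const_mul _)
          (fun r hr => hypIntegrand_nonneg hz hr.1.le hr.2)
          (fun r hr => hypIntegrand_le hz hr.1.le hr.2)
    _ = (1 + log z) * (√(z + 1))⁻¹ * ∫ r in (0 : ℝ)..z - 1, r ^ α * (√(z + 1 - r))⁻¹ :=
        intervalIntegral.integral_const_mul _ _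
    _ ≤ (1 + log z) * (√(z + 1))⁻¹ * ((2 / (α + 1) + 4) * (z - 1) ^ (α + 1) * (√z)⁻¹) := by
        gcongr
        exact integral_rpow_mul_inv_sqrt_le h1 h2 hz
    _ = (2 / (α + 1) + 4) * ((√(z + 1))⁻¹ * (√z)⁻¹) * (z - 1) ^ (α + 1) * (1 + log z) := by
        ring
    _ ≤ (2 / (α + 1) + 4) * z⁻¹ * (z - 1) ^ (α + 1) * (1 + log z) := by
        gcongr

/-- With `α = 2s - n(1/p - 1/q)` and `-1 < α ≤ 0`, there is a constant `C` such that
for all `z > 1`,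
`∫₀^{z-1} r^α ((z+1)²-r²)^{-1/2} F(1/2,1/2;1;((z-1)²-r²)/((z+1)²-r²)) dr
  ≤ C z⁻¹ (z-1)^{1+α} (1 + ln z)`. -/
theorem weighted_hyp_integral_estimate (s n p q α : ℝ)
    (hα : α = 2 * s - n * (1/p - 1/q)) (h1 : -1 < α) (h2 : α ≤ 0) :
    ∃ C > 0, ∀ z : ℝ, 1 < z →
      (∫ r in (0:ℝ)..(z - 1), r ^ α * (Real.sqrt ((z + 1) ^ 2 - r ^ 2))⁻¹ *
          hypR (1/2) (1/2) 1 (((z - 1) ^ 2 - r ^ 2) / ((z + 1) ^ 2 - r ^ 2)))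
        ≤ C * z⁻¹ * (z - 1) ^ (1 + α) * (1 + Real.log z) :=
  weighted_hyp_integral_estimate_general α h1 h2
end
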